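/- For fixed r > 0, the functions f_n(x) := 2nr√π · I₀(2n²r‖x‖) · e^{-n²(‖x‖² + r²)} converge pointwise on ℝ² to the indicator function of the circle C_r = {x : ‖x‖ = r}: f_n(x) → 1 if ‖x‖ = r and f_n(x) → 0 otherwise. -/

import Mathlib

open Real MeasureTheory Filter Topology

/-- Modified Bessel function of the first kind of order 0. -/
noncomputable def I0 (t : ℝ) : ℝ :=
  (1 / (2 * π)) * ∫ θ in (-π)..π, Real.exp (t * Real.cos θ)

lemma I0_nonneg (t : ℝ) : 0 ≤ I0 t := by
  apply mul_nonneg (by positivity)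
  apply intervalIntegral.integral_nonneg (by linarith [pi_pos])
  intro θ _; positivity

lemma I0_le_exp {t : ℝ} (ht : 0 ≤ t) : I0 t ≤ Real.exp t := by
  have h : ∫ θ in (-π)..π, Real.exp (t * Real.cos θ) ≤ ∫ _θ in (-π)..π, Real.exp t := by
    apply intervalIntegral.integral_mono_on (by linarith [pi_pos])
    · exact Continuous.intervalIntegrable (by continuity) _ _
    · exact intervalIntegrable_const
    · intro θ _
      exact Real.exp_le_exp.2 (mul_le_of_le_one_right ht (Real.cos_le_one θ))
  have hπ : (0:ℝ) < π := pi_pos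
  calc I0 t ≤ (1 / (2 * π)) * ∫ _θ in (-π)..π, Real.exp t := by
        apply mul_le_mul_of_nonneg_left h (by positivity)
    _ = Real.exp t := by
        rw [intervalIntegral.integral_const]
        simp only [smul_eq_mul]
        field_simp
        ring

lemma I0_mul_exp (t : ℝ) : I0 t * Real.exp (-t)
    = (1 / π) * ∫ θ in (0:ℝ)..π, Real.exp (-(t * (1 - Real.cos θ))) := by
  have hsymm : ∫ θ in (-π)..(0:ℝ), Real.exp (t * Real.cos θ)
      = ∫ θ in (0:ℝ)..π, Real.exp (t * Real.cos θ) := by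
    have := intervalIntegral.integral_comp_neg (a := (0:ℝ)) (b := π)
      (fun θ => Real.exp (t * Real.cos θ))
    simpa [Real.cos_neg] using this.symm
  have hsplit : ∫ θ in (-π)..π, Real.exp (t * Real.cos θ)
      = 2 * ∫ θ in (0:ℝ)..π, Real.exp (t * Real.cos θ) := by
    have hint : ∀ a b : ℝ, IntervalIntegrable (fun θ => Real.exp (t * Real.cos θ)) volume a b :=
      fun a b => Continuous.intervalIntegrable (by continuity) a b
    rw [← intervalIntegral.integral_add_adjacent_intervals (a := -π) (b := 0) (c := π)
      (hint _ _) (hint _ _), hsymm]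
    ring
  have hπ : (0:ℝ) < π := pi_pos
  rw [I0, hsplit]
  rw [show (1 / (2 * π)) * (2 * ∫ θ in (0:ℝ)..π, Real.exp (t * Real.cos θ)) * Real.exp (-t)
      = (1/π) * ((∫ θ in (0:ℝ)..π, Real.exp (t * Real.cos θ)) * Real.exp (-t)) by
    field_simp]
  congr 1
  rw [← intervalIntegral.integral_mul_const]
  congr 1; funext θ
  rw [← Real.exp_add]; ring_nf

lemma tendsto_sqrt_atTop' : Tendsto Real.sqrt atTop atTop := by
  apply tendsto_atTop_atTop.2
  intro b
  exact ⟨b ^ 2, fun a ha => by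
    calc b ≤ |b| := le_abs_self b
    _ = Real.sqrt (b ^ 2) := (Real.sqrt_sq_eq_abs b).symm
    _ ≤ Real.sqrt a := Real.sqrt_le_sqrt ha⟩

lemma sin_div_tendsto : Tendsto (fun x : ℝ => Real.sin x / x) (𝓝[≠] 0) (𝓝 1) := by
  have h := Real.hasDerivAt_sin 0
  rw [hasDerivAt_iff_tendsto_slope] at h
  simpa [slope_fun_def, Real.cos_zero, div_eq_inv_mul] using h

lemma cos_limit {φ : ℝ} (hφ : 0 < φ) :
    Tendsto (fun t : ℝ => t * (1 - Real.cos (φ / Real.sqrt t))) atTop (𝓝 (1/2 * φ^2)) := by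
  have hε : Tendsto (fun s : ℝ => φ / (2*s)) atTop (𝓝[≠] 0) := by
    rw [tendsto_nhdsWithin_iff]
    constructor
    · have := tendsto_inv_atTop_zero.const_mul (φ/2)
      simp only [mul_zero] at this
      apply this.congr
      intro s; ring
    · filter_upwards [eventually_gt_atTop (0:ℝ)] with s hs
      exact div_ne_zero (ne_of_gt hφ) (by positivity)
  have hsin : Tendsto (fun s : ℝ => Real.sin (φ/(2*s)) / (φ/(2*s))) atTop (𝓝 1) :=
    sin_div_tendsto.comp hε
  have hS : Tendsto (fun s : ℝ => 2 * ((φ/2) * (Real.sin (φ/(2*s)) / (φ/(2*s))))^2)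
      atTop (𝓝 (1/2 * φ^2)) := by
    have := ((hsin.const_mul (φ/2)).pow 2).const_mul 2
    convert this using 2
    ring
  have key : ∀ s : ℝ, 0 < s →
      s^2 * (1 - Real.cos (φ/s)) = 2 * ((φ/2) * (Real.sin (φ/(2*s)) / (φ/(2*s))))^2 := by
    intro s hs
    have h1 : Real.sin (φ/(2*s))^2 = 1/2 - Real.cos (φ/s) / 2 := by
      have h2 := Real.sin_sq_eq_half_sub (φ/(2*s))
      rwa [show 2*(φ/(2*s)) = φ/s by field_simp] at h2
    have hc : 1 - Real.cos (φ/s) = 2 * Real.sin (φ/(2*s))^2 := by linarith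
    rw [hc]
    have hφ0 : φ ≠ 0 := ne_of_gt hφ
    have hs0 : s ≠ 0 := ne_of_gt hs
    field_simp
  have hg : Tendsto (fun s : ℝ => s^2 * (1 - Real.cos (φ/s))) atTop (𝓝 (1/2 * φ^2)) := by
    apply hS.congr'
    filter_upwards [eventually_gt_atTop (0:ℝ)] with s hs
    exact (key s hs).symm
  have := hg.comp tendsto_sqrt_atTop'
  apply this.congr'
  filter_upwards [eventually_ge_atTop (0:ℝ)] with t ht
  simp only [Function.comp_apply, Real.sq_sqrt ht]

lemma dct_main :
    Tendsto (fun t : ℝ => ∫ φ : ℝ, (Set.Ioc (0:ℝ) (π * Real.sqrt t)).indicator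
        (fun ψ => Real.exp (-(t * (1 - Real.cos (ψ / Real.sqrt t))))) φ)
      atTop (𝓝 (Real.sqrt (π / 2))) := by
  have hval : ∫ φ : ℝ, (Set.Ioi (0:ℝ)).indicator (fun ψ => Real.exp (-(1/2) * ψ^2)) φ
      = Real.sqrt (π / 2) := by
    rw [MeasureTheory.integral_indicator measurableSet_Ioi, integral_gaussian_Ioi]
    rw [show π / (1/2:ℝ) = (π/2) * 4 by ring, Real.sqrt_mul (by positivity),
      show Real.sqrt 4 = 2 by
        rw [show (4:ℝ) = 2^2 by norm_num]; exact Real.sqrt_sq (by norm_num)]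
    ring
  rw [← hval]
  apply tendsto_integral_filter_of_dominated_convergence
    (bound := fun φ => (Set.Ioi (0:ℝ)).indicator (fun ψ => Real.exp (-(2/π^2) * ψ^2)) φ)
  · filter_upwards with t
    exact (Continuous.aestronglyMeasurable (by continuity)).indicator measurableSet_Ioc
  · filter_upwards [eventually_ge_atTop (1:ℝ)] with t ht
    filter_upwards with φ
    by_cases hφ : φ ∈ Set.Ioc (0:ℝ) (π * Real.sqrt t)
    · rw [Set.indicator_of_mem hφ]
      have ht0 : (0:ℝ) < t := lt_of_lt_of_le one_pos ht
      have hst : 0 < Real.sqrt t := Real.sqrt_pos.2 ht0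
      set u := φ / Real.sqrt t with hu
      have hu0 : 0 < u := div_pos hφ.1 hst
      have huπ : u ≤ π := by
        rw [hu, div_le_iff₀ hst]
        calc φ ≤ π * Real.sqrt t := hφ.2
        _ = π * Real.sqrt t := rfl
      have hsin : u / π ≤ Real.sin (u/2) := by
        have h2 := Real.mul_le_sin (x := u/2) (by linarith) (by linarith)
        have hπ : (0:ℝ) < π := pi_pos
        calc u / π = 2/π * (u/2) := by field_simp
        _ ≤ Real.sin (u/2) := h2
      have hcos : 1 - Real.cos u = 2 * Real.sin (u/2)^2 := by
        have := Real.sin_sq_eq_half_sub (u/2)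
        rw [show 2*(u/2) = u by ring] at this
        linarith
      have hsq : (u/π)^2 ≤ Real.sin (u/2)^2 := by
        apply sq_le_sq' _ hsin
        have : (0:ℝ) < u / π := div_pos hu0 pi_pos
        linarith [Real.sin_nonneg_of_nonneg_of_le_pi (by linarith : (0:ℝ) ≤ u/2) (by linarith [pi_pos] : u/2 ≤ π)]
      have hu2 : u^2 = φ^2 / t := by
        rw [hu, div_pow, Real.sq_sqrt ht0.le]
      have hkey : 2/π^2 * φ^2 ≤ t * (1 - Real.cos u) := by
        have h3 : t * (1 - Real.cos u) = 2 * t * Real.sin (u/2)^2 := by rw [hcos]; ring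
        have h4 : 2 * t * (u/π)^2 ≤ 2 * t * Real.sin (u/2)^2 :=
          mul_le_mul_of_nonneg_left hsq (by positivity)
        have h5 : 2 * t * (u/π)^2 = 2/π^2 * φ^2 := by
          rw [div_pow, hu2]
          field_simp
        linarith
      rw [Set.indicator_of_mem (show φ ∈ Set.Ioi (0:ℝ) from hφ.1), Real.norm_eq_abs, abs_of_nonneg (Real.exp_nonneg _)]
      exact Real.exp_le_exp.2 (by linarith)
    · rw [Set.indicator_of_notMem hφ]
      simp only [norm_zero]
      exact Set.indicator_nonneg (fun ψ _ => Real.exp_nonneg _) φ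
  · exact (integrable_exp_neg_mul_sq (by positivity)).indicator measurableSet_Ioi
  · filter_upwards with φ
    rcases le_or_gt φ 0 with hφ | hφ
    · have h0 : ∀ t : ℝ, (Set.Ioc (0:ℝ) (π * Real.sqrt t)).indicator
          (fun ψ => Real.exp (-(t * (1 - Real.cos (ψ / Real.sqrt t))))) φ = 0 := by
        intro t
        apply Set.indicator_of_notMem
        simp only [Set.mem_Ioc, not_and]
        intro h; linarith
      have h1 : (Set.Ioi (0:ℝ)).indicator (fun ψ => Real.exp (-(1/2) * ψ^2)) φ = 0 := by
        apply Set.indicator_of_notMem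
        simp only [Set.mem_Ioi, not_lt]; exact hφ
      simp only [h0, h1]
      exact tendsto_const_nhds
    · have hev : ∀ᶠ t in atTop, (Set.Ioc (0:ℝ) (π * Real.sqrt t)).indicator
          (fun ψ => Real.exp (-(t * (1 - Real.cos (ψ / Real.sqrt t))))) φ
          = Real.exp (-(t * (1 - Real.cos (φ / Real.sqrt t)))) := by
        filter_upwards [eventually_ge_atTop ((φ/π)^2)] with t ht
        apply Set.indicator_of_mem
        constructor
        · exact hφ
        · have h1 : φ / π ≤ Real.sqrt t := by
            calc φ / π = Real.sqrt ((φ/π)^2) := (Real.sqrt_sq (by positivity)).symm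
            _ ≤ Real.sqrt t := Real.sqrt_le_sqrt ht
          calc φ = π * (φ / π) := by field_simp
          _ ≤ π * Real.sqrt t := by
            exact mul_le_mul_of_nonneg_left h1 pi_pos.le
      rw [tendsto_congr' hev, Set.indicator_of_mem (show φ ∈ Set.Ioi (0:ℝ) from hφ)]
      have h2 := cos_limit hφ
      have := (Real.continuous_exp.tendsto _).comp h2.neg
      simpa [neg_mul, Function.comp_def] using this

lemma interval_eq (t : ℝ) (ht : 0 < t) :
    Real.sqrt t * ∫ θ in (0:ℝ)..π, Real.exp (-(t * (1 - Real.cos θ)))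
    = ∫ φ : ℝ, (Set.Ioc (0:ℝ) (π * Real.sqrt t)).indicator
        (fun ψ => Real.exp (-(t * (1 - Real.cos (ψ / Real.sqrt t))))) φ := by
  have hst : 0 < Real.sqrt t := Real.sqrt_pos.2 ht
  have h1 : (∫ θ in (0:ℝ)..π, Real.exp (-(t * (1 - Real.cos θ))))
      = ∫ θ in (0:ℝ)..π,
        (fun ψ => Real.exp (-(t * (1 - Real.cos (ψ / Real.sqrt t))))) (θ * Real.sqrt t) := by
    apply intervalIntegral.integral_congr
    intro θ _
    simp only
    rw [mul_div_cancel_right₀ θ (ne_of_gt hst)]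
  rw [h1, intervalIntegral.integral_comp_mul_right (fun ψ => Real.exp (-(t * (1 - Real.cos (ψ / Real.sqrt t))))) (ne_of_gt hst), smul_eq_mul, zero_mul,
    intervalIntegral.integral_of_le (by positivity),
    ← MeasureTheory.integral_indicator measurableSet_Ioc, ← mul_assoc,
    mul_inv_cancel₀ (ne_of_gt hst), one_mul]

lemma main_limit : Tendsto (fun t : ℝ => Real.sqrt (2*π*t) * I0 t * Real.exp (-t))
    atTop (𝓝 1) := by
  have key : ∀ᶠ t in atTop, Real.sqrt (2*π*t) * I0 t * Real.exp (-t)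
      = Real.sqrt (2/π) * ∫ φ : ℝ, (Set.Ioc (0:ℝ) (π * Real.sqrt t)).indicator
          (fun ψ => Real.exp (-(t * (1 - Real.cos (ψ / Real.sqrt t))))) φ := by
    filter_upwards [eventually_gt_atTop (0:ℝ)] with t ht
    rw [mul_assoc, I0_mul_exp, ← interval_eq t ht]
    have hs : Real.sqrt (2*π*t) = Real.sqrt (2/π) * π * Real.sqrt t := by
      rw [show 2*π*t = (2/π)*π^2*t by field_simp, Real.sqrt_mul (by positivity),
        Real.sqrt_mul (by positivity), Real.sqrt_sq pi_pos.le]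
    rw [hs]
    have hπ := pi_ne_zero
    field_simp
  rw [tendsto_congr' key]
  have h := dct_main.const_mul (Real.sqrt (2/π))
  have hlim : Real.sqrt (2/π) * Real.sqrt (π/2) = 1 := by
    rw [← Real.sqrt_mul (by positivity), show (2/π)*(π/2) = 1 by field_simp, Real.sqrt_one]
  rwa [hlim] at h

/-- Pointwise convergence of `fₙ = 2nr√π·I₀(2n²r‖x‖)·e^{-n²(‖x‖²+r²)}` to the
indicator of the circle of radius `r`. -/
theorem fn_tendsto_indicator_circle (r : ℝ) (hr : 0 < r)
    (x : EuclideanSpace ℝ (Fin 2)) :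
    Tendsto (fun n : ℕ =>
        2 * (n:ℝ) * r * Real.sqrt π * I0 (2 * (n:ℝ)^2 * r * ‖x‖) *
          Real.exp (-(n:ℝ)^2 * (‖x‖^2 + r^2)))
      atTop (𝓝 (if ‖x‖ = r then 1 else 0)) := by
  by_cases hx : ‖x‖ = r
  · rw [if_pos hx]
    simp only [hx]
    have hT : Tendsto (fun n : ℕ => 2*(n:ℝ)^2*r^2) atTop atTop := by
      apply Tendsto.atTop_mul_const (by positivity : (0:ℝ) < r^2)
      apply Tendsto.const_mul_atTop two_pos
      exact (tendsto_pow_atTop two_ne_zero).comp tendsto_natCast_atTop_atTop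
    have h := main_limit.comp hT
    apply h.congr
    intro n
    simp only [Function.comp_apply]
    rw [show 2*π*(2*(n:ℝ)^2*r^2) = (2*(n:ℝ)*r)^2*π by ring, Real.sqrt_mul (sq_nonneg _),
      Real.sqrt_sq (by positivity : (0:ℝ) ≤ 2*(n:ℝ)*r),
      show 2*(n:ℝ)^2*r*r = 2*(n:ℝ)^2*r^2 by ring,
      show -(n:ℝ)^2*(r^2+r^2) = -(2*(n:ℝ)^2*r^2) by ring]
  · rw [if_neg hx]
    have hc : (0:ℝ) < (‖x‖ - r)^2 := by
      have h0 : ‖x‖ - r ≠ 0 := sub_ne_zero.2 hx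
      positivity
    apply squeeze_zero (g := fun n : ℕ => 2*r*Real.sqrt π * ((n:ℝ) *
        Real.exp (-((‖x‖ - r)^2) * (n:ℝ)^2)))
    · intro n
      have := I0_nonneg (2*(n:ℝ)^2*r*‖x‖)
      positivity
    · intro n
      have hI := I0_le_exp (show (0:ℝ) ≤ 2*(n:ℝ)^2*r*‖x‖ by positivity)
      calc 2*(n:ℝ)*r*Real.sqrt π * I0 (2*(n:ℝ)^2*r*‖x‖) * Real.exp (-(n:ℝ)^2*(‖x‖^2+r^2))
          ≤ 2*(n:ℝ)*r*Real.sqrt π * Real.exp (2*(n:ℝ)^2*r*‖x‖) *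
            Real.exp (-(n:ℝ)^2*(‖x‖^2+r^2)) := by
            apply mul_le_mul_of_nonneg_right _ (Real.exp_nonneg _)
            exact mul_le_mul_of_nonneg_left hI (by positivity)
        _ = 2*r*Real.sqrt π * ((n:ℝ) * Real.exp (-((‖x‖ - r)^2) * (n:ℝ)^2)) := by
            rw [mul_assoc (2*(n:ℝ)*r*Real.sqrt π), ← Real.exp_add,
              show 2*(n:ℝ)^2*r*‖x‖ + -(n:ℝ)^2*(‖x‖^2+r^2) = -((‖x‖-r)^2)*(n:ℝ)^2 by ring]
            ring
    · have h1 : Tendsto (fun n : ℕ => (n:ℝ) * Real.exp (-((‖x‖ - r)^2) * (n:ℝ)^2))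
          atTop (𝓝 0) := by
        apply squeeze_zero' (g := fun n : ℕ => (n:ℝ) * Real.exp (-(n:ℝ)))
        · filter_upwards with n; positivity
        · obtain ⟨N, hN⟩ := exists_nat_ge (1/(‖x‖-r)^2)
          filter_upwards [eventually_ge_atTop N] with n hn
          apply mul_le_mul_of_nonneg_left _ (Nat.cast_nonneg n)
          apply Real.exp_le_exp.2
          have hn' : (1/(‖x‖-r)^2 : ℝ) ≤ (n:ℝ) := le_trans hN (Nat.cast_le.2 hn)
          have h2 : (1:ℝ) ≤ (n:ℝ) * (‖x‖-r)^2 := (div_le_iff₀ hc).mp hn'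
          have h3 : (n:ℝ) ≤ (‖x‖-r)^2 * (n:ℝ)^2 := by nlinarith [Nat.cast_nonneg (α := ℝ) n]
          linarith
        · have := (tendsto_pow_mul_exp_neg_atTop_nhds_zero 1).comp tendsto_natCast_atTop_atTop
          simpa [Function.comp_def] using this
      have := h1.const_mul (2*r*Real.sqrt π)
      simpa using this
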